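/- If (i,j) is a reducible pair in a network N, then the augmentation of the pair (i,j) applied to the reduction N^{(i,j)} yields a network isomorphic to N; that is, ^{(i,j)}(N^{(i,j)}) ≅ N. -/
import Mathlib


/-- A directed graph with node set `V ⊆ ℕ` and arc set `A`.  Leaves are
identified with their taxon labels (natural numbers). -/
structure Net where
  V : Finset ℕ
  A : Finset (ℕ × ℕ)

namespace Net

def indeg (N : Net) (v : ℕ) : ℕ := (N.A.filter (fun a => a.2 = v)).card
def outdeg (N : Net) (v : ℕ) : ℕ := (N.A.filter (fun a => a.1 = v)).card

def isLeaf (N : Net) (v : ℕ) : Prop := v ∈ N.V ∧ N.indeg v = 1 ∧ N.outdeg v = 0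
def isRoot (N : Net) (v : ℕ) : Prop := v ∈ N.V ∧ N.indeg v = 0 ∧ N.outdeg v = 1
def isTreeNode (N : Net) (v : ℕ) : Prop := v ∈ N.V ∧ N.indeg v = 1 ∧ N.outdeg v = 2
def isRetic (N : Net) (v : ℕ) : Prop := v ∈ N.V ∧ N.indeg v = 2 ∧ N.outdeg v = 1

/-- The set of leaves (= taxa) of a network. -/
def leaves (N : Net) : Finset ℕ := N.V.filter (fun v => N.indeg v = 1 ∧ N.outdeg v = 0)

/-- Number of reticulation nodes. -/
def numRetic (N : Net) : ℕ := (N.V.filter (fun v => N.indeg v = 2 ∧ N.outdeg v = 1)).card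

/-- `N` is a rooted binary phylogenetic network: arcs join nodes, it is acyclic,
has a unique root, and every node is a root, leaf, tree node or reticulation. -/
def isPhylo (N : Net) : Prop :=
  (∀ a ∈ N.A, a.1 ∈ N.V ∧ a.2 ∈ N.V) ∧
  (∀ v, ¬ Relation.TransGen (fun u w => (u, w) ∈ N.A) v v) ∧
  (∃! r, N.isRoot r) ∧
  (∀ v ∈ N.V, N.isRoot v ∨ N.isLeaf v ∨ N.isTreeNode v ∨ N.isRetic v)

/-- `(i,j)` is a cherry: `i ≠ j` are leaves with a common parent. -/
def isCherry (N : Net) (i j : ℕ) : Prop :=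
  i ≠ j ∧ N.isLeaf i ∧ N.isLeaf j ∧ ∃ p, (p, i) ∈ N.A ∧ (p, j) ∈ N.A

/-- `(i,j)` is a reticulated cherry: the parent of `i` is a reticulation,
the parent of `j` is a tree node and a parent of the parent of `i`. -/
def isRetCherry (N : Net) (i j : ℕ) : Prop :=
  i ≠ j ∧ N.isLeaf i ∧ N.isLeaf j ∧
    ∃ pi pj, (pi, i) ∈ N.A ∧ (pj, j) ∈ N.A ∧
      N.isRetic pi ∧ N.isTreeNode pj ∧ (pj, pi) ∈ N.A

/-- `(i,j)` is a reducible pair. -/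
def Reducible (N : Net) (s : ℕ × ℕ) : Prop := N.isCherry s.1 s.2 ∨ N.isRetCherry s.1 s.2

end Net

/-- The reduction of a cherry `(i,j)`: delete leaf `i` and simplify the
(now elementary) common parent `p`, whose parent is `g`. -/
def CherryReduce (N : Net) (i j : ℕ) (N' : Net) : Prop :=
  ∃ p g, (p, i) ∈ N.A ∧ (p, j) ∈ N.A ∧ (g, p) ∈ N.A ∧
    N'.V = (N.V.erase i).erase p ∧
    N'.A = (N.A \ {(p, i), (p, j), (g, p)}) ∪ {(g, j)}

/-- The reduction of a reticulated cherry `(i,j)`: delete the arc from the parent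
`pj` of `j` to the parent `pi` of `i`, and simplify the two elementary nodes. -/
def RetCherryReduce (N : Net) (i j : ℕ) (N' : Net) : Prop :=
  ∃ pi pj q g, (pi, i) ∈ N.A ∧ (pj, j) ∈ N.A ∧ (pj, pi) ∈ N.A ∧
    (q, pi) ∈ N.A ∧ q ≠ pj ∧ (g, pj) ∈ N.A ∧
    N'.V = (N.V.erase pi).erase pj ∧
    N'.A = (N.A \ {(pj, pi), (q, pi), (pi, i), (g, pj), (pj, j)}) ∪ {(q, i), (g, j)}

/-- `N'` is the reduction `N^{(i,j)}` of the reducible pair `s = (i,j)` in `N`. -/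
def Reduces (N : Net) (s : ℕ × ℕ) (N' : Net) : Prop :=
  (N.isCherry s.1 s.2 ∧ CherryReduce N s.1 s.2 N') ∨
  (N.isRetCherry s.1 s.2 ∧ RetCherryReduce N s.1 s.2 N')

/-- `N'` is the result of reducing in `N` the pairs of the sequence `S`, from left to right. -/
inductive ReducesSeq : Net → List (ℕ × ℕ) → Net → Prop
  | nil (N : Net) : ReducesSeq N [] N
  | cons {N M N' : Net} {s : ℕ × ℕ} {S : List (ℕ × ℕ)} :
      Reduces N s M → ReducesSeq M S N' → ReducesSeq N (s :: S) N'

/-- `N` is the trivial network `I l` (a root and the leaf `l`). -/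
def isTrivial (N : Net) (l : ℕ) : Prop :=
  ∃ r, r ≠ l ∧ N.V = {r, l} ∧ N.A = {(r, l)}

/-- `S` is a complete reducible sequence for `N`. -/
def CompleteRS (N : Net) (S : List (ℕ × ℕ)) : Prop :=
  ∃ N' l, ReducesSeq N S N' ∧ isTrivial N' l

/-- `N` is an orchard network. -/
def Net.isOrchard (N : Net) : Prop := N.isPhylo ∧ ∃ S, CompleteRS N S

/-- Isomorphism of networks: an arc-preserving and arc-reflecting bijection
of the nodes which is the identity on the leaves. -/
def NetIso (N N' : Net) : Prop :=
  ∃ φ : ℕ → ℕ, Set.BijOn φ ↑N.V ↑N'.V ∧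
    (∀ u ∈ N.V, ∀ v ∈ N.V, ((u, v) ∈ N.A ↔ (φ u, φ v) ∈ N'.A)) ∧
    ∀ l ∈ N.leaves, φ l = l

/-- Augmentation of `(i,j)` when `i` is a new taxon: create a new leaf `i`,
subdivide the arc `(q,j)` into `j` with a new node `p`, and add the arc `(p,i)`. -/
def CherryAug (N : Net) (i j : ℕ) (N' : Net) : Prop :=
  ∃ q p, (q, j) ∈ N.A ∧ i ∉ N.V ∧ p ∉ N.V ∧ p ≠ i ∧
    N'.V = insert i (insert p N.V) ∧
    N'.A = (N.A.erase (q, j)) ∪ {(q, p), (p, j), (p, i)}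

/-- Augmentation of `(i,j)` when `i` is already a leaf: subdivide the arcs into
`i` and `j` with new nodes `pi`, `pj` and add the arc `(pj, pi)`. -/
def RetAug (N : Net) (i j : ℕ) (N' : Net) : Prop :=
  ∃ qi qj pi pj, (qi, i) ∈ N.A ∧ (qj, j) ∈ N.A ∧
    pi ∉ N.V ∧ pj ∉ N.V ∧ pi ≠ pj ∧
    N'.V = insert pi (insert pj N.V) ∧
    N'.A = ((N.A.erase (qi, i)).erase (qj, j)) ∪
      {(qi, pi), (pi, i), (qj, pj), (pj, j), (pj, pi)}

/-- `N'` is the augmentation `^{(i,j)}N` of the pair `s = (i,j)` in `N`. -/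
def Augments (N : Net) (s : ℕ × ℕ) (N' : Net) : Prop :=
  s.1 ≠ s.2 ∧ N.isLeaf s.2 ∧
    ((s.1 ∉ N.leaves ∧ CherryAug N s.1 s.2 N') ∨
     (s.1 ∈ N.leaves ∧ RetAug N s.1 s.2 N'))

/-- The total order on pairs: `(i,j) ≤ (i',j')` iff `i < i'` or (`i = i'` and `j ≤ j'`). -/
def pairLE (p q : ℕ × ℕ) : Prop := p.1 < q.1 ∨ (p.1 = q.1 ∧ p.2 ≤ q.2)

/-- Strict version of `pairLE`. -/
def pairLT (p q : ℕ × ℕ) : Prop := p.1 < q.1 ∨ (p.1 = q.1 ∧ p.2 < q.2)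

/-- Lexicographic order on sequences of pairs (of the same length). -/
def seqLE : List (ℕ × ℕ) → List (ℕ × ℕ) → Prop
  | [], [] => True
  | p :: S, q :: S' => pairLT p q ∨ (p = q ∧ seqLE S S')
  | _, _ => False

/-- `s` is the minimum reducible pair of `N`. -/
def isMRP (N : Net) (s : ℕ × ℕ) : Prop :=
  N.Reducible s ∧ ∀ t, N.Reducible t → pairLE s t

/-- `S` is the minimum complete reducible sequence of `N`. -/
def isMCRS (N : Net) (S : List (ℕ × ℕ)) : Prop :=
  CompleteRS N S ∧ ∀ S', CompleteRS N S' → seqLE S S'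

/-- `N` is (isomorphic to) the network `^S I` generated by applying the
augmentations of `S`, from right to left, to a trivial network. -/
inductive Generates : List (ℕ × ℕ) → Net → Prop
  | triv {N : Net} {l : ℕ} : isTrivial N l → Generates [] N
  | cons {s : ℕ × ℕ} {S : List (ℕ × ℕ)} {N N' : Net} :
      Generates S N → Augments N s N' → Generates (s :: S) N'

/-- `S` is a minimum augmentation sequence: `S = MCRS(^S I)`. -/
def isMinAugSeq (S : List (ℕ × ℕ)) : Prop :=
  ∃ N, Generates S N ∧ isMCRS N S

/-- `N` is tree-child: every internal node has a child that is not a reticulation. -/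
def Net.isTreeChild (N : Net) : Prop :=
  ∀ v ∈ N.V, ¬ N.isLeaf v → ∃ c, (v, c) ∈ N.A ∧ ¬ N.isRetic c

/-- The possible states of a taxon in a network. -/
inductive LState | sN | sP | sS | sT
deriving DecidableEq

open Classical in
/-- The state `σ_N(i)` of a taxon `i`: `sN` if `i` is not a leaf of `N`; otherwise
`sP` if its parent is a reticulation; otherwise `sS` if its sibling is a
reticulation; otherwise `sT`. -/
noncomputable def state (N : Net) (i : ℕ) : LState :=
  if ¬ N.isLeaf i then .sN
  else if ∃ p, (p, i) ∈ N.A ∧ N.isRetic p then .sP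
  else if ∃ p s, (p, i) ∈ N.A ∧ (p, s) ∈ N.A ∧ s ≠ i ∧ N.isRetic s then .sS
  else .sT
section AuxDeg

private lemma fcard_one {α : Type*} [DecidableEq α] {s : Finset α} {a x : α}
    (h : s.card = 1) (ha : a ∈ s) (hx : x ∈ s) : x = a := by
  obtain ⟨b, hb⟩ := Finset.card_eq_one.mp h
  rw [hb, Finset.mem_singleton] at ha hx
  rw [ha, hx]

private lemma fcard_two {α : Type*} [DecidableEq α] {s : Finset α} {a b x : α}
    (h : s.card = 2) (ha : a ∈ s) (hb : b ∈ s) (hab : a ≠ b) (hx : x ∈ s) :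
    x = a ∨ x = b := by
  have hsub : ({a, b} : Finset α) ⊆ s := by
    intro y hy
    rcases Finset.mem_insert.mp hy with rfl | hy
    · exact ha
    · rw [Finset.mem_singleton] at hy; exact hy ▸ hb
  have heq : ({a, b} : Finset α) = s :=
    Finset.eq_of_subset_of_card_le hsub (by rw [h, Finset.card_pair hab])
  rw [← heq] at hx
  simpa using hx

private lemma Net.in_none {N : Net} {v x : ℕ} (h : N.indeg v = 0) : (x, v) ∉ N.A := by
  simp only [Net.indeg] at h
  intro hx
  have hm : (x, v) ∈ N.A.filter (fun a => a.2 = v) := by simp [hx]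
  rw [Finset.card_eq_zero.mp h] at hm
  simp at hm

private lemma Net.out_none {N : Net} {v x : ℕ} (h : N.outdeg v = 0) : (v, x) ∉ N.A := by
  simp only [Net.outdeg] at h
  intro hx
  have hm : (v, x) ∈ N.A.filter (fun a => a.1 = v) := by simp [hx]
  rw [Finset.card_eq_zero.mp h] at hm
  simp at hm

private lemma Net.in_unique {N : Net} {v p x : ℕ} (h : N.indeg v = 1)
    (hp : (p, v) ∈ N.A) (hx : (x, v) ∈ N.A) : x = p := by
  simp only [Net.indeg] at h
  have := fcard_one (s := N.A.filter (fun a => a.2 = v)) (a := (p, v)) (x := (x, v)) h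
    (by simp [hp]) (by simp [hx])
  exact congrArg Prod.fst this

private lemma Net.out_unique {N : Net} {v c x : ℕ} (h : N.outdeg v = 1)
    (hc : (v, c) ∈ N.A) (hx : (v, x) ∈ N.A) : x = c := by
  simp only [Net.outdeg] at h
  have := fcard_one (s := N.A.filter (fun a => a.1 = v)) (a := (v, c)) (x := (v, x)) h
    (by simp [hc]) (by simp [hx])
  exact congrArg Prod.snd this

private lemma Net.in_two {N : Net} {v p q x : ℕ} (h : N.indeg v = 2)
    (hp : (p, v) ∈ N.A) (hq : (q, v) ∈ N.A) (hpq : p ≠ q) (hx : (x, v) ∈ N.A) :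
    x = p ∨ x = q := by
  simp only [Net.indeg] at h
  have := fcard_two (s := N.A.filter (fun a => a.2 = v)) (a := (p, v)) (b := (q, v))
    (x := (x, v)) h (by simp [hp]) (by simp [hq]) (by simp [hpq]) (by simp [hx])
  rcases this with h1 | h1
  · exact Or.inl (congrArg Prod.fst h1)
  · exact Or.inr (congrArg Prod.fst h1)

private lemma Net.out_two {N : Net} {v c d x : ℕ} (h : N.outdeg v = 2)
    (hc : (v, c) ∈ N.A) (hd : (v, d) ∈ N.A) (hcd : c ≠ d) (hx : (v, x) ∈ N.A) :
    x = c ∨ x = d := by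
  simp only [Net.outdeg] at h
  have := fcard_two (s := N.A.filter (fun a => a.1 = v)) (a := (v, c)) (b := (v, d))
    (x := (v, x)) h (by simp [hc]) (by simp [hd]) (by simp [hcd]) (by simp [hx])
  rcases this with h1 | h1
  · exact Or.inl (congrArg Prod.snd h1)
  · exact Or.inr (congrArg Prod.snd h1)

end AuxDeg

/-- If `(i,j)` is reducible in `N`, then augmenting `(i,j)` in the reduction
`N^{(i,j)}` yields a network isomorphic to `N`: `^{(i,j)}(N^{(i,j)}) ≅ N`. -/
theorem aug_of_reduce_iso (N M N' : Net) (s : ℕ × ℕ) (h : N.isPhylo)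
    (hred : Reduces N s M) (haug : Augments M s N') :
    NetIso N' N := by
  obtain ⟨hPe, hAc, -, hCl⟩ := h
  have hns : ∀ v, (v, v) ∉ N.A := fun v hv => hAc v (Relation.TransGen.single hv)
  have hn2 : ∀ u v, (u, v) ∈ N.A → (v, u) ∉ N.A := fun u v h1 h2 =>
    hAc u (Relation.TransGen.head h1 (Relation.TransGen.single h2))
  obtain ⟨i, j⟩ := s
  obtain ⟨hsne, hMLj, hbr⟩ := haug
  rcases hred with ⟨hC, hCR⟩ | ⟨hRC, hRR⟩
  · -- Cherry case
    obtain ⟨hij, ⟨hiV, hiI, hiO⟩, ⟨hjV, hjI, hjO⟩, -⟩ := hC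
    obtain ⟨p, g, hpi, hpj, hgp, hMV, hMA⟩ := hCR
    have hpV : p ∈ N.V := (hPe _ hpi).1
    have hgV : g ∈ N.V := (hPe _ hgp).1
    have hip : i ≠ p := by rintro rfl; exact hns _ hpi
    have hgp2 : g ≠ p := by rintro rfl; exact hns _ hgp
    have hig : i ≠ g := by rintro rfl; exact Net.out_none hiO hgp
    have hjg : j ≠ g := by rintro rfl; exact Net.out_none hjO hgp
    have hjp : j ≠ p := by rintro rfl; exact Net.out_none hjO hpi
    have hpT : N.indeg p = 1 ∧ N.outdeg p = 2 := by
      rcases hCl p hpV with ⟨-, h0, -⟩ | ⟨-, -, h0⟩ | ⟨-, h1, h2⟩ | ⟨-, -, h1⟩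
      · exact absurd hgp (Net.in_none h0)
      · exact absurd hpi (Net.out_none h0)
      · exact ⟨h1, h2⟩
      · exact absurd (Net.out_unique h1 hpj hpi) hij
    have hini : ∀ x, (x, i) ∈ N.A → x = p := fun x hx => Net.in_unique hiI hpi hx
    have hinj : ∀ x, (x, j) ∈ N.A → x = p := fun x hx => Net.in_unique hjI hpj hx
    have hinp : ∀ x, (x, p) ∈ N.A → x = g := fun x hx => Net.in_unique hpT.1 hgp hx
    have houtp : ∀ x, (p, x) ∈ N.A → x = i ∨ x = j := fun x hx =>
      Net.out_two hpT.2 hpi hpj hij hx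
    have hrest : ∀ u v, (u, v) ∈ N.A →
        ¬((u, v) = (p, i) ∨ (u, v) = (p, j) ∨ (u, v) = (g, p)) →
        u ≠ i ∧ u ≠ p ∧ v ≠ i ∧ v ≠ p := by
      intro u v huv hne
      refine ⟨?_, ?_, ?_, ?_⟩
      · rintro rfl; exact Net.out_none hiO huv
      · rintro rfl
        rcases houtp v huv with rfl | rfl
        · exact hne (Or.inl rfl)
        · exact hne (Or.inr (Or.inl rfl))
      · rintro rfl; exact hne (Or.inl (by rw [hini u huv]))
      · rintro rfl; exact hne (Or.inr (Or.inr (by rw [hinp u huv])))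
    have hiM : i ∉ M.V := by
      rw [hMV]
      simp [Finset.mem_erase]
    rcases hbr with ⟨-, q, p', hqjM, -, hp'M, hp'i, hNV, hNA⟩ | ⟨hmem, -⟩
    swap
    · exact absurd (Finset.mem_filter.mp hmem).1 hiM
    -- identify q = g
    have hq : q = g := by
      rw [hMA] at hqjM
      rcases Finset.mem_union.mp hqjM with hm | hm
      · obtain ⟨hm1, hm2⟩ := Finset.mem_sdiff.mp hm
        have he := hinj q hm1
        rw [he] at hm2
        exact absurd (by simp : (p, j) ∈ ({(p, i), (p, j), (g, p)} : Finset (ℕ × ℕ))) hm2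
      · rw [Finset.mem_singleton, Prod.mk.injEq] at hm
        exact hm.1
    rw [hq] at hqjM hNA
    have hgjN : (g, j) ∉ N.A := fun hx => hgp2 (hinj g hx)
    have hA' : N'.A = (N.A \ {(p, i), (p, j), (g, p)}) ∪ {(g, p'), (p', j), (p', i)} := by
      rw [hNA, hMA]
      ext a
      simp only [Finset.mem_union, Finset.mem_erase, Finset.mem_sdiff, Finset.mem_insert,
        Finset.mem_singleton]
      constructor
      · rintro (⟨hne, h1 | rfl⟩ | h2)
        · exact Or.inl h1
        · exact absurd rfl hne
        · exact Or.inr h2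
      · rintro (h1 | h2)
        · exact Or.inl ⟨fun e => hgjN (e ▸ h1.1), Or.inl h1⟩
        · exact Or.inr h2
    have hMVmem : ∀ x, x ∈ M.V ↔ x ∈ N.V ∧ x ≠ i ∧ x ≠ p := by
      intro x; rw [hMV]; simp [Finset.mem_erase]; tauto
    have hNVmem : ∀ x, x ∈ N'.V ↔ x = i ∨ x = p' ∨ (x ∈ N.V ∧ x ≠ i ∧ x ≠ p) := by
      intro x; rw [hNV]; simp only [Finset.mem_insert, hMVmem]
    set φ : ℕ → ℕ := fun x => if x = p' then p else x with hφ
    have hfix : ∀ x, x ∈ N.V → x ≠ i → x ≠ p → φ x = x := by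
      intro x hx h1 h2
      have hxp' : x ≠ p' := fun e => hp'M (e ▸ (hMVmem x).mpr ⟨hx, h1, h2⟩)
      simp [hφ, hxp']
    have hφp' : φ p' = p := by simp [hφ]
    have hφi : φ i = i := by simp [hφ, Ne.symm hp'i]
    have hφg : φ g = g := hfix g hgV (Ne.symm hig) hgp2
    have hφj : φ j = j := hfix j hjV (Ne.symm hij) hjp
    have hpN' : ∀ u, u ∈ N'.V → φ u = p → u = p' := by
      intro u hu he
      by_cases h1 : u = p'
      · exact h1
      · rw [hφ] at he; simp only [h1, if_false] at he
        subst he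
        rcases (hNVmem u).mp hu with h2 | h2 | ⟨-, -, h3⟩
        · exact absurd h2 (Ne.symm hip)
        · exact h2
        · exact absurd rfl h3
    refine ⟨φ, ⟨?_, ?_, ?_⟩, ?_, ?_⟩
    · -- MapsTo
      intro x hx
      rw [Finset.mem_coe] at hx ⊢
      rcases (hNVmem x).mp hx with rfl | rfl | ⟨h1, h2, h3⟩
      · rw [hφi]; exact hiV
      · rw [hφp']; exact hpV
      · rw [hfix x h1 h2 h3]; exact h1
    · -- InjOn
      intro x hx y hy e
      rw [Finset.mem_coe] at hx hy
      by_cases hxp : x = p' <;> by_cases hyp : y = p'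
      · rw [hxp, hyp]
      · exact absurd (hpN' y hy (by rw [← e, hxp, hφp'])) hyp
      · exact absurd (hpN' x hx (by rw [e, hyp, hφp'])) hxp
      · simp only [hφ, hxp, hyp, if_false] at e; exact e
    · -- SurjOn
      intro y hy
      rw [Finset.mem_coe] at hy
      by_cases hyi : y = i
      · exact ⟨i, by rw [Finset.mem_coe]; exact (hNVmem i).mpr (Or.inl rfl), by rw [hφi, hyi]⟩
      · by_cases hyp : y = p
        · exact ⟨p', by rw [Finset.mem_coe]; exact (hNVmem p').mpr (Or.inr (Or.inl rfl)),
            by rw [hφp', hyp]⟩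
        · exact ⟨y, by rw [Finset.mem_coe]; exact (hNVmem y).mpr (Or.inr (Or.inr ⟨hy, hyi, hyp⟩)),
            hfix y hy hyi hyp⟩
    · -- arcs
      intro u hu v hv
      constructor
      · intro huv
        rw [hA'] at huv
        rcases Finset.mem_union.mp huv with hm | hm
        · obtain ⟨h1, h2⟩ := Finset.mem_sdiff.mp hm
          simp only [Finset.mem_insert, Finset.mem_singleton] at h2
          obtain ⟨hu1, hu2, hv1, hv2⟩ := hrest u v h1 h2
          rw [hfix u (hPe _ h1).1 hu1 hu2, hfix v (hPe _ h1).2 hv1 hv2]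
          exact h1
        · simp only [Finset.mem_insert, Finset.mem_singleton, Prod.mk.injEq] at hm
          rcases hm with ⟨rfl, rfl⟩ | ⟨rfl, rfl⟩ | ⟨rfl, rfl⟩
          · rw [hφg, hφp']; exact hgp
          · rw [hφp', hφj]; exact hpj
          · rw [hφp', hφi]; exact hpi
      · intro hN
        by_cases hup : u = p' <;> by_cases hvp : v = p'
        · exact absurd hN (by rw [hup, hvp, hφp']; exact hns p)
        · have hφv : φ v = v := by simp [hφ, hvp]
          rw [hup, hφp', hφv] at hN
          rcases houtp v hN with rfl | rfl
          · rw [hA', hup]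
            exact Finset.mem_union_right _ (by simp)
          · rw [hA', hup]
            exact Finset.mem_union_right _ (by simp)
        · have hφu : φ u = u := by simp [hφ, hup]
          rw [hvp, hφp', hφu] at hN
          have := hinp u hN
          subst this
          rw [hA', hvp]
          exact Finset.mem_union_right _ (by simp)
        · have hφu : φ u = u := by simp [hφ, hup]
          have hφv : φ v = v := by simp [hφ, hvp]
          rw [hφu, hφv] at hN
          have hunp : u ≠ p := fun e => hup (hpN' u hu (by rw [hφu, e]))
          have hvnp : v ≠ p := fun e => hvp (hpN' v hv (by rw [hφv, e]))
          have hvni : v ≠ i := fun e => hunp (hini u (e ▸ hN))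
          rw [hA']
          refine Finset.mem_union_left _ (Finset.mem_sdiff.mpr ⟨hN, ?_⟩)
          simp only [Finset.mem_insert, Finset.mem_singleton, Prod.mk.injEq, not_or]
          exact ⟨fun h => hunp h.1, fun h => hunp h.1, fun h => hvnp h.2⟩
    · -- leaves
      intro l hl
      obtain ⟨hl1, -, hl3⟩ := Finset.mem_filter.mp hl
      have hlp' : l ≠ p' := by
        rintro rfl
        have harc : (l, j) ∈ N'.A := by
          rw [hA']; exact Finset.mem_union_right _ (by simp)
        exact Net.out_none hl3 harc
      simp [hφ, hlp']
  · -- Reticulated cherry case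
    obtain ⟨hij, ⟨hiV, hiI, hiO⟩, ⟨hjV, hjI, hjO⟩, pi0, pj0, hpi0, hpj0, hpi0R, hpj0T, -⟩ := hRC
    obtain ⟨pi, pj, q, g, hpii, hpjj, hpjpi, hqpi, hqnpj, hgpj, hMV, hMA⟩ := hRR
    have e1 : pi0 = pi := Net.in_unique hiI hpii hpi0
    have e2 : pj0 = pj := Net.in_unique hjI hpjj hpj0
    rw [e1] at hpi0R; rw [e2] at hpj0T
    obtain ⟨hpiV, hpiI, hpiO⟩ := hpi0R
    obtain ⟨hpjV, hpjI, hpjO⟩ := hpj0T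
    have hpipj : pi ≠ pj := by rintro rfl; exact hns _ hpjpi
    have hipi : i ≠ pi := by rintro rfl; exact hns _ hpii
    have hipj : i ≠ pj := by rintro rfl; exact Net.out_none hiO hpjj
    have hjpi : j ≠ pi := by rintro rfl; exact Net.out_none hjO hpii
    have hjpj : j ≠ pj := by rintro rfl; exact hns _ hpjj
    have hqpi2 : q ≠ pi := by rintro rfl; exact hns _ hqpi
    have hgpj2 : g ≠ pj := by rintro rfl; exact hns _ hgpj
    have hgpi : g ≠ pi := by rintro rfl; exact hn2 _ _ hpjpi hgpj
    have hqV : q ∈ N.V := (hPe _ hqpi).1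
    have hgV : g ∈ N.V := (hPe _ hgpj).1
    have hini : ∀ x, (x, i) ∈ N.A → x = pi := fun x hx => Net.in_unique hiI hpii hx
    have hinj : ∀ x, (x, j) ∈ N.A → x = pj := fun x hx => Net.in_unique hjI hpjj hx
    have hinpi : ∀ x, (x, pi) ∈ N.A → x = pj ∨ x = q := fun x hx =>
      Net.in_two hpiI hpjpi hqpi (Ne.symm hqnpj) hx
    have hinpj : ∀ x, (x, pj) ∈ N.A → x = g := fun x hx => Net.in_unique hpjI hgpj hx
    have houtpi : ∀ x, (pi, x) ∈ N.A → x = i := fun x hx => Net.out_unique hpiO hpii hx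
    have houtpj : ∀ x, (pj, x) ∈ N.A → x = j ∨ x = pi := fun x hx =>
      Net.out_two hpjO hpjj hpjpi hjpi hx
    have hrest : ∀ u v, (u, v) ∈ N.A →
        ¬((u, v) = (pj, pi) ∨ (u, v) = (q, pi) ∨ (u, v) = (pi, i) ∨ (u, v) = (g, pj) ∨
          (u, v) = (pj, j)) →
        u ≠ pi ∧ u ≠ pj ∧ v ≠ pi ∧ v ≠ pj := by
      intro u v huv hne
      refine ⟨?_, ?_, ?_, ?_⟩
      · rintro rfl
        exact hne (Or.inr (Or.inr (Or.inl (by rw [houtpi v huv]))))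
      · rintro rfl
        rcases houtpj v huv with rfl | rfl
        · exact hne (Or.inr (Or.inr (Or.inr (Or.inr rfl))))
        · exact hne (Or.inl rfl)
      · rintro rfl
        rcases hinpi u huv with rfl | rfl
        · exact hne (Or.inl rfl)
        · exact hne (Or.inr (Or.inl rfl))
      · rintro rfl
        exact hne (Or.inr (Or.inr (Or.inr (Or.inl (by rw [hinpj u huv])))))
    have hiMV : i ∈ M.V := by
      rw [hMV]
      exact Finset.mem_erase.mpr ⟨hipj, Finset.mem_erase.mpr ⟨hipi, hiV⟩⟩
    rcases hbr with ⟨-, q', p', hq', hiM', -⟩ | ⟨-, qi, qj, pi', pj', hqiA, hqjA,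
      hpi'M, hpj'M, hpij', hNV, hNA⟩
    · exact absurd hiMV hiM'
    have hQI : (q, i) ∉ N.A := fun hx => hqpi2 (hini q hx)
    have hGJ : (g, j) ∉ N.A := fun hx => hgpj2 (hinj g hx)
    have hqi : qi = q := by
      rw [hMA] at hqiA
      rcases Finset.mem_union.mp hqiA with hm | hm
      · obtain ⟨hm1, hm2⟩ := Finset.mem_sdiff.mp hm
        have he := hini qi hm1
        rw [he] at hm2
        exact absurd (by simp : (pi, i) ∈
          ({(pj, pi), (q, pi), (pi, i), (g, pj), (pj, j)} : Finset (ℕ × ℕ))) hm2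
      · simp only [Finset.mem_insert, Finset.mem_singleton, Prod.mk.injEq] at hm
        rcases hm with ⟨h1, -⟩ | ⟨-, h2⟩
        · exact h1
        · exact absurd h2 hij
    have hqj : qj = g := by
      rw [hMA] at hqjA
      rcases Finset.mem_union.mp hqjA with hm | hm
      · obtain ⟨hm1, hm2⟩ := Finset.mem_sdiff.mp hm
        have he := hinj qj hm1
        rw [he] at hm2
        exact absurd (by simp : (pj, j) ∈
          ({(pj, pi), (q, pi), (pi, i), (g, pj), (pj, j)} : Finset (ℕ × ℕ))) hm2
      · simp only [Finset.mem_insert, Finset.mem_singleton, Prod.mk.injEq] at hm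
        rcases hm with ⟨-, h2⟩ | ⟨h1, -⟩
        · exact absurd h2 hij.symm
        · exact h1
    rw [hqi, hqj] at hNA
    have hA' : N'.A = (N.A \ {(pj, pi), (q, pi), (pi, i), (g, pj), (pj, j)}) ∪
        {(q, pi'), (pi', i), (g, pj'), (pj', j), (pj', pi')} := by
      rw [hNA, hMA]
      ext a
      simp only [Finset.mem_union, Finset.mem_erase, Finset.mem_sdiff, Finset.mem_insert,
        Finset.mem_singleton]
      constructor
      · rintro (⟨hne2, hne1, h1 | rfl | rfl⟩ | h2)
        · exact Or.inl h1
        · exact absurd rfl hne1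
        · exact absurd rfl hne2
        · exact Or.inr h2
      · rintro (h1 | h2)
        · exact Or.inl ⟨fun e => hGJ (e ▸ h1.1), fun e => hQI (e ▸ h1.1), Or.inl h1⟩
        · exact Or.inr h2
    have hMVmem : ∀ x, x ∈ M.V ↔ x ∈ N.V ∧ x ≠ pi ∧ x ≠ pj := by
      intro x; rw [hMV]; simp [Finset.mem_erase]; tauto
    have hNVmem : ∀ x, x ∈ N'.V ↔ x = pi' ∨ x = pj' ∨ (x ∈ N.V ∧ x ≠ pi ∧ x ≠ pj) := by
      intro x; rw [hNV]; simp only [Finset.mem_insert, hMVmem]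
    set φ : ℕ → ℕ := fun x => if x = pi' then pi else if x = pj' then pj else x with hφ
    have hfix : ∀ x, x ∈ N.V → x ≠ pi → x ≠ pj → φ x = x := by
      intro x hx h1 h2
      have hxM : x ∈ M.V := (hMVmem x).mpr ⟨hx, h1, h2⟩
      have ha : x ≠ pi' := fun e => hpi'M (e ▸ hxM)
      have hb : x ≠ pj' := fun e => hpj'M (e ▸ hxM)
      simp [hφ, ha, hb]
    have hφpi' : φ pi' = pi := by simp [hφ]
    have hφpj' : φ pj' = pj := by simp [hφ, Ne.symm hpij']
    have hφi : φ i = i := hfix i hiV hipi hipj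
    have hφj : φ j = j := hfix j hjV hjpi hjpj
    have hφq : φ q = q := hfix q hqV hqpi2 hqnpj
    have hφg : φ g = g := hfix g hgV hgpi hgpj2
    have hpiN' : ∀ u, u ∈ N'.V → φ u = pi → u = pi' := by
      intro u hu he
      by_cases h1 : u = pi'
      · exact h1
      · by_cases h2 : u = pj'
        · rw [h2, hφpj'] at he; exact absurd he.symm hpipj
        · rw [hφ] at he; simp only [h1, h2, if_false] at he
          subst he
          rcases (hNVmem u).mp hu with h3 | h3 | ⟨-, h4, -⟩
          · exact h3
          · exact absurd h3 h2
          · exact absurd rfl h4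
    have hpjN' : ∀ u, u ∈ N'.V → φ u = pj → u = pj' := by
      intro u hu he
      by_cases h2 : u = pj'
      · exact h2
      · by_cases h1 : u = pi'
        · rw [h1, hφpi'] at he; exact absurd he hpipj
        · rw [hφ] at he; simp only [h1, h2, if_false] at he
          subst he
          rcases (hNVmem u).mp hu with h3 | h3 | ⟨-, -, h4⟩
          · exact absurd h3 h1
          · exact h3
          · exact absurd rfl h4
    refine ⟨φ, ⟨?_, ?_, ?_⟩, ?_, ?_⟩
    · -- MapsTo
      intro x hx
      rw [Finset.mem_coe] at hx ⊢
      rcases (hNVmem x).mp hx with rfl | rfl | ⟨h1, h2, h3⟩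
      · rw [hφpi']; exact hpiV
      · rw [hφpj']; exact hpjV
      · rw [hfix x h1 h2 h3]; exact h1
    · -- InjOn
      intro x hx y hy e
      rw [Finset.mem_coe] at hx hy
      by_cases hx1 : x = pi'
      · rw [hx1, hφpi'] at e
        rw [hx1, hpiN' y hy e.symm]
      · by_cases hy1 : y = pi'
        · rw [hy1, hφpi'] at e
          rw [hy1, hpiN' x hx e]
        · by_cases hx2 : x = pj'
          · rw [hx2, hφpj'] at e
            rw [hx2, hpjN' y hy e.symm]
          · by_cases hy2 : y = pj'
            · rw [hy2, hφpj'] at e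
              rw [hy2, hpjN' x hx e]
            · simp only [hφ, hx1, hx2, hy1, hy2, if_false] at e
              exact e
    · -- SurjOn
      intro y hy
      rw [Finset.mem_coe] at hy
      by_cases hy1 : y = pi
      · exact ⟨pi', by rw [Finset.mem_coe]; exact (hNVmem pi').mpr (Or.inl rfl),
          by rw [hφpi', hy1]⟩
      · by_cases hy2 : y = pj
        · exact ⟨pj', by rw [Finset.mem_coe]; exact (hNVmem pj').mpr (Or.inr (Or.inl rfl)),
            by rw [hφpj', hy2]⟩
        · exact ⟨y, by rw [Finset.mem_coe]; exact (hNVmem y).mpr (Or.inr (Or.inr ⟨hy, hy1, hy2⟩)),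
            hfix y hy hy1 hy2⟩
    · -- arcs
      intro u hu v hv
      constructor
      · intro huv
        rw [hA'] at huv
        rcases Finset.mem_union.mp huv with hm | hm
        · obtain ⟨h1, h2⟩ := Finset.mem_sdiff.mp hm
          simp only [Finset.mem_insert, Finset.mem_singleton] at h2
          obtain ⟨hu1, hu2, hv1, hv2⟩ := hrest u v h1 h2
          rw [hfix u (hPe _ h1).1 hu1 hu2, hfix v (hPe _ h1).2 hv1 hv2]
          exact h1
        · simp only [Finset.mem_insert, Finset.mem_singleton, Prod.mk.injEq] at hm
          rcases hm with ⟨rfl, rfl⟩ | ⟨rfl, rfl⟩ | ⟨rfl, rfl⟩ | ⟨rfl, rfl⟩ | ⟨rfl, rfl⟩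
          · rw [hφq, hφpi']; exact hqpi
          · rw [hφpi', hφi]; exact hpii
          · rw [hφg, hφpj']; exact hgpj
          · rw [hφpj', hφj]; exact hpjj
          · rw [hφpj', hφpi']; exact hpjpi
      · intro hN
        by_cases hu1 : u = pi'
        · rw [hu1, hφpi'] at hN
          have hv' : φ v = i := houtpi _ hN
          have hvi : v = i := by
            by_cases hv1 : v = pi'
            · rw [hv1, hφpi'] at hv'; exact absurd hv'.symm hipi
            · by_cases hv2 : v = pj'
              · rw [hv2, hφpj'] at hv'; exact absurd hv'.symm hipj
              · simpa [hφ, hv1, hv2] using hv'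
          rw [hu1, hvi, hA']
          exact Finset.mem_union_right _ (by simp)
        · by_cases hu2 : u = pj'
          · rw [hu2, hφpj'] at hN
            rcases houtpj _ hN with hv' | hv'
            · have hvj : v = j := by
                by_cases hv1 : v = pi'
                · rw [hv1, hφpi'] at hv'; exact absurd hv'.symm hjpi
                · by_cases hv2 : v = pj'
                  · rw [hv2, hφpj'] at hv'; exact absurd hv'.symm hjpj
                  · simpa [hφ, hv1, hv2] using hv'
              rw [hu2, hvj, hA']
              exact Finset.mem_union_right _ (by simp)
            · have hvpi : v = pi' := hpiN' v hv hv'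
              rw [hu2, hvpi, hA']
              exact Finset.mem_union_right _ (by simp)
          · have hφu : φ u = u := by simp [hφ, hu1, hu2]
            rw [hφu] at hN
            have hunpi : u ≠ pi := fun e => hu1 (hpiN' u hu (by rw [hφu, e]))
            have hunpj : u ≠ pj := fun e => hu2 (hpjN' u hu (by rw [hφu, e]))
            by_cases hv1 : v = pi'
            · rw [hv1, hφpi'] at hN
              rcases hinpi u hN with rfl | rfl
              · exact absurd rfl hunpj
              · rw [hv1, hA']
                exact Finset.mem_union_right _ (by simp)
            · by_cases hv2 : v = pj'
              · rw [hv2, hφpj'] at hN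
                have := hinpj u hN
                subst this
                rw [hv2, hA']
                exact Finset.mem_union_right _ (by simp)
              · have hφv : φ v = v := by simp [hφ, hv1, hv2]
                rw [hφv] at hN
                have hvnpi : v ≠ pi := fun e => hv1 (hpiN' v hv (by rw [hφv, e]))
                have hvnpj : v ≠ pj := fun e => hv2 (hpjN' v hv (by rw [hφv, e]))
                rw [hA']
                refine Finset.mem_union_left _ (Finset.mem_sdiff.mpr ⟨hN, ?_⟩)
                simp only [Finset.mem_insert, Finset.mem_singleton, Prod.mk.injEq, not_or]
                exact ⟨fun h => hunpj h.1, fun h => hvnpi h.2, fun h => hunpi h.1,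
                  fun h => hvnpj h.2, fun h => hunpj h.1⟩
    · -- leaves
      intro l hl
      obtain ⟨hl1, -, hl3⟩ := Finset.mem_filter.mp hl
      have hlpi' : l ≠ pi' := by
        rintro rfl
        have harc : (l, i) ∈ N'.A := by
          rw [hA']; exact Finset.mem_union_right _ (by simp)
        exact Net.out_none hl3 harc
      have hlpj' : l ≠ pj' := by
        rintro rfl
        have harc : (l, j) ∈ N'.A := by
          rw [hA']; exact Finset.mem_union_right _ (by simp)
        exact Net.out_none hl3 harc
      simp [hφ, hlpi', hlpj']
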